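/- arXiv:1302.5598 — 2 statements merged into one kernel-verified Lean document; each statement's English description precedes it below -/
import Mathlib

section
/- Let T₁ and T₂ be trees with vertex sets V₁ and V₂, and let Γ be an Ã₁×Ã₁ group, i.e. a group of shape-preserving bijections of V₁×V₂ acting simply transitively on V₁×V₂. Fix a vertex v₀ ∈ V₁×V₂ and define sh(c) = sh(v₀, c·v₀) for c ∈ Γ. Fix (m,n) ∈ ℕ×ℕ and suppose g : Γ → ℂ is finitely supported with support contained in {c ∈ Γ : sh(c) = (m,n)}. Then for every finitely supported f : Γ → ℂ one has ‖f*g‖₂ ≤ (m+1)(n+1)·‖f‖₂·‖g‖₂. -/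
/-- The ℓ²-norm of a finitely supported function, viewed as an element of the
monoid algebra (so that multiplication is convolution). -/
noncomputable def l2norm {Γ : Type*} (f : MonoidAlgebra ℂ Γ) : ℝ :=
  Real.sqrt (∑ c ∈ f.coeff.support, ‖f.coeff c‖ ^ 2)

/-- The shape of an ordered pair of vertices in a product of two trees. -/
noncomputable def shape {V₁ V₂ : Type*} (T₁ : SimpleGraph V₁) (T₂ : SimpleGraph V₂)
    (u v : V₁ × V₂) : ℕ × ℕ :=
  (T₁.dist u.1 v.1, T₂.dist u.2 v.2)

/-!
Split each product `c = a * b` with `b ∈ supp g` according to its cancellation `k`, the shape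
from `a • v₀` to the median `p` of `v₀`, `a • v₀`, `c • v₀` in the product of trees; then
`k ≤ (m, n)`, so there are at most `(m + 1)(n + 1)` values of `k`. For fixed `k` the median `p` is
determined by `a` alone and by `c` alone, and `a⁻¹ • p` is determined by `b` alone; by simple
transitivity `(c, a, a') ↦ (a, a'⁻¹ * c)` is then injective on pairs `a, a'` splitting `c`, and
Cauchy–Schwarz bounds the `k`-th piece of `f * g` by `‖f‖₂ ‖g‖₂`.
-/

open Finset

namespace SimpleGraph

variable {V : Type*} {T : SimpleGraph V}

theorem Walk.IsPath.append_of_forall_mem_support {x y z : V} {p : T.Walk x y} {q : T.Walk y z}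
    (hp : p.IsPath) (hq : q.IsPath) (h : ∀ v ∈ p.support, v ∈ q.support → v = y) :
    (p.append q).IsPath := by
  have hq' := hq.support_nodup
  rw [← q.cons_tail_support, List.nodup_cons] at hq'
  rw [Walk.isPath_def, Walk.support_append, List.nodup_append]
  refine ⟨hp.support_nodup, hq'.2, fun v hv w hw hvw => ?_⟩
  subst hvw
  have hvq : v ∈ q.support := q.cons_tail_support ▸ List.mem_cons_of_mem _ hw
  exact hq'.1 (h v hv hvq ▸ hw)

theorem IsTree.length_eq_dist_of_isPath (hT : T.IsTree) {x y : V} {p : T.Walk x y}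
    (hp : p.IsPath) : p.length = T.dist x y := by
  obtain ⟨q, hq, hlen⟩ := hT.connected.exists_path_of_dist x y
  rw [(hT.existsUnique_path x y).unique hp hq, hlen]

theorem IsTree.eq_of_dist_add_dist_eq (hT : T.IsTree) {x y p q : V}
    (hp : T.dist x p + T.dist p y = T.dist x y) (hq : T.dist x q + T.dist q y = T.dist x y)
    (h : T.dist x p = T.dist x q) : p = q := by
  obtain ⟨P₁, hP₁⟩ := (hT.connected x p).exists_walk_length_eq_dist
  obtain ⟨P₂, hP₂⟩ := (hT.connected p y).exists_walk_length_eq_dist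
  obtain ⟨Q₁, hQ₁⟩ := (hT.connected x q).exists_walk_length_eq_dist
  obtain ⟨Q₂, hQ₂⟩ := (hT.connected q y).exists_walk_length_eq_dist
  have hP : (P₁.append P₂).IsPath :=
    Walk.isPath_of_length_eq_dist _ (by rw [Walk.length_append, hP₁, hP₂, hp])
  have hQ : (Q₁.append Q₂).IsPath :=
    Walk.isPath_of_length_eq_dist _ (by rw [Walk.length_append, hQ₁, hQ₂, hq])
  have hPQ := (hT.existsUnique_path x y).unique hP hQ
  calc p = (P₁.append P₂).getVert (T.dist x p) := by simp [Walk.getVert_append, hP₁]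
    _ = (Q₁.append Q₂).getVert (T.dist x q) := by rw [hPQ, h]
    _ = q := by simp [Walk.getVert_append, hQ₁]

theorem IsTree.exists_median (hT : T.IsTree) (x y z : V) :
    ∃ p, T.dist x p + T.dist p y = T.dist x y ∧ T.dist x p + T.dist p z = T.dist x z ∧
      T.dist y p + T.dist p z = T.dist y z := by
  classical
  obtain ⟨P, hP, hPlen⟩ := hT.connected.exists_path_of_dist x y
  -- `p` is the vertex of the geodesic from `x` to `y` that is closest to `z`
  obtain ⟨p, hpP, hpmin⟩ := P.support.toFinset.exists_min_image (T.dist · z) ⟨x, by simp⟩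
  rw [List.mem_toFinset] at hpP
  obtain ⟨Q, hQ, hQlen⟩ := hT.connected.exists_path_of_dist p z
  have hQP : ∀ v ∈ Q.support, v ∈ P.support → v = p := by
    intro v hvQ hvP
    by_contra hvp
    have hsplit := congrArg Walk.length (Q.take_spec hvQ)
    rw [Walk.length_append, hT.length_eq_dist_of_isPath (hQ.takeUntil hvQ),
      hT.length_eq_dist_of_isPath (hQ.dropUntil hvQ), hQlen] at hsplit
    have := (hT.connected p v).pos_dist_of_ne (Ne.symm hvp)
    have := hpmin v (List.mem_toFinset.mpr hvP)
    omega
  have hxp := hT.length_eq_dist_of_isPath (hP.takeUntil hpP)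
  have hpy := hT.length_eq_dist_of_isPath (hP.dropUntil hpP)
  have hxz := hT.length_eq_dist_of_isPath <| (hP.takeUntil hpP).append_of_forall_mem_support hQ
    fun v hv hvQ => hQP v hvQ (P.support_takeUntil_subset_support hpP hv)
  have hyz := hT.length_eq_dist_of_isPath <|
    (hP.dropUntil hpP).reverse.append_of_forall_mem_support hQ fun v hv hvQ =>
      hQP v hvQ (P.support_dropUntil_subset_support hpP (by simpa using hv))
  have hxy := congrArg Walk.length (P.take_spec hpP)
  rw [Walk.length_append] at hxz hyz hxy
  rw [Walk.length_reverse] at hyz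
  exact ⟨p, by omega, by omega, by rw [dist_comm]; omega⟩

end SimpleGraph

section Shape

variable {V₁ V₂ : Type*} {T₁ : SimpleGraph V₁} {T₂ : SimpleGraph V₂}

theorem shape_comm (x y : V₁ × V₂) : shape T₁ T₂ x y = shape T₁ T₂ y x := by
  simp only [shape, SimpleGraph.dist_comm]

theorem exists_shape_median (hT₁ : T₁.IsTree) (hT₂ : T₂.IsTree) (x y z : V₁ × V₂) :
    ∃ p, shape T₁ T₂ x p + shape T₁ T₂ p y = shape T₁ T₂ x y ∧
      shape T₁ T₂ x p + shape T₁ T₂ p z = shape T₁ T₂ x z ∧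
      shape T₁ T₂ y p + shape T₁ T₂ p z = shape T₁ T₂ y z := by
  obtain ⟨p₁, h₁⟩ := hT₁.exists_median x.1 y.1 z.1
  obtain ⟨p₂, h₂⟩ := hT₂.exists_median x.2 y.2 z.2
  refine ⟨(p₁, p₂), ?_⟩
  simp only [shape, Prod.mk_add_mk, Prod.mk.injEq]
  tauto

theorem eq_of_shape_add_shape_eq (hT₁ : T₁.IsTree) (hT₂ : T₂.IsTree) {x y p q : V₁ × V₂}
    (hp : shape T₁ T₂ x p + shape T₁ T₂ p y = shape T₁ T₂ x y)
    (hq : shape T₁ T₂ x q + shape T₁ T₂ q y = shape T₁ T₂ x y)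
    (h : shape T₁ T₂ p y = shape T₁ T₂ q y) : p = q := by
  have hx : shape T₁ T₂ x p = shape T₁ T₂ x q := add_right_cancel (by rw [hp, h, hq])
  simp only [shape, Prod.mk_add_mk, Prod.mk.injEq] at hp hq hx
  exact Prod.ext (hT₁.eq_of_dist_add_dist_eq hp.1 hq.1 hx.1)
    (hT₂.eq_of_dist_add_dist_eq hp.2 hq.2 hx.2)

/-- Here `k` is the Gromov product `(x | z)_y` and `p` is the median of `x`, `y`, `z`. -/
theorem exists_median_of_shape_add_shape_eq (hT₁ : T₁.IsTree) (hT₂ : T₂.IsTree)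
    {x y z : V₁ × V₂} {k : ℕ × ℕ}
    (h : shape T₁ T₂ x y + shape T₁ T₂ y z = shape T₁ T₂ x z + 2 • k) :
    ∃ p, shape T₁ T₂ x p + shape T₁ T₂ p y = shape T₁ T₂ x y ∧
      shape T₁ T₂ x p + shape T₁ T₂ p z = shape T₁ T₂ x z ∧
      shape T₁ T₂ p y = k ∧ shape T₁ T₂ p z + k = shape T₁ T₂ y z := by
  obtain ⟨p, hxy, hxz, hyz⟩ := exists_shape_median hT₁ hT₂ x y z
  rw [shape_comm y p] at hyz
  refine ⟨p, hxy, hxz, ?_, ?_⟩ <;>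
  · simp only [Prod.ext_iff, Prod.fst_add, Prod.snd_add, Prod.smul_fst, Prod.smul_snd,
      smul_eq_mul] at *
    omega

theorem exists_shape_add_shape_eq (hT₁ : T₁.IsTree) (hT₂ : T₂.IsTree) (x y z : V₁ × V₂) :
    ∃ k ≤ shape T₁ T₂ y z, shape T₁ T₂ x y + shape T₁ T₂ y z = shape T₁ T₂ x z + 2 • k := by
  obtain ⟨p, hxy, hxz, hyz⟩ := exists_shape_median hT₁ hT₂ x y z
  rw [shape_comm y p] at hyz
  refine ⟨shape T₁ T₂ p y, ?_, ?_⟩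
  · rw [← hyz]; exact le_self_add
  · simp only [Prod.ext_iff, Prod.fst_add, Prod.snd_add, Prod.smul_fst, Prod.smul_snd,
      smul_eq_mul] at *
    omega

end Shape

section Convolution

theorem sum_eq_sum_sum_filter_of_existsUnique {ι κ M : Type*} [AddCommMonoid M]
    (s : Finset ι) (t : Finset κ) (P : κ → ι → Prop) [∀ k, DecidablePred (P k)] (h : ι → M)
    (hP : ∀ i ∈ s, h i ≠ 0 → ∃! k, k ∈ t ∧ P k i) :
    ∑ i ∈ s, h i = ∑ k ∈ t, ∑ i ∈ s with P k i, h i := by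
  simp_rw [sum_filter]
  rw [sum_comm]
  refine sum_congr rfl fun i hi => ?_
  by_cases hi0 : h i = 0
  · simp [hi0]
  obtain ⟨k, ⟨hk, hPk⟩, huniq⟩ := hP i hi hi0
  rw [sum_eq_single_of_mem k hk fun k' hk' hne => if_neg fun hP' => hne (huniq k' ⟨hk', hP'⟩),
    if_pos hPk]

theorem sum_norm_sum_sq_le {ι κ E : Type*} [SeminormedAddCommGroup E] (C : Finset ι)
    (K : Finset κ) (y : κ → ι → E) {B : ℝ} (hB : ∀ k ∈ K, ∑ c ∈ C, ‖y k c‖ ^ 2 ≤ B) :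
    ∑ c ∈ C, ‖∑ k ∈ K, y k c‖ ^ 2 ≤ #K ^ 2 * B := by
  calc ∑ c ∈ C, ‖∑ k ∈ K, y k c‖ ^ 2
      ≤ ∑ c ∈ C, #K * ∑ k ∈ K, ‖y k c‖ ^ 2 := by
        gcongr with c
        exact (pow_le_pow_left₀ (norm_nonneg _) (norm_sum_le _ _) 2).trans
          (sq_sum_le_card_mul_sum_sq ..)
    _ = #K * ∑ k ∈ K, ∑ c ∈ C, ‖y k c‖ ^ 2 := by rw [← mul_sum, sum_comm]
    _ ≤ #K * ∑ _k ∈ K, B := by gcongr with k hk; exact hB k hk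
    _ = #K ^ 2 * B := by rw [sum_const, nsmul_eq_mul]; ring

/-- `hR` makes `(c, a, a₁) ↦ (a, a₁⁻¹ * c)` injective on triples with `R a c` and `R a₁ c`, which
re-indexes the Cauchy–Schwarz bound as a sum over `F ×ˢ G`. -/
theorem sum_norm_sum_filter_mul_sq_le {Γ 𝕜 : Type*} [Group Γ] [SeminormedRing 𝕜]
    (f g : Γ → 𝕜) (F G C : Finset Γ) (R : Γ → Γ → Prop) [DecidableRel R]
    (hRG : ∀ ⦃a c⦄, R a c → a⁻¹ * c ∈ G)
    (hR : ∀ ⦃a a₁ a₂ c d⦄, R a c → R a d → R a₁ c → R a₂ d → a₁⁻¹ * c = a₂⁻¹ * d → a₁ = a₂) :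
    ∑ c ∈ C, ‖∑ a ∈ F with R a c, f a * g (a⁻¹ * c)‖ ^ 2 ≤
      (∑ a ∈ F, ‖f a‖ ^ 2) * ∑ b ∈ G, ‖g b‖ ^ 2 := by
  classical
  set A : Γ → Finset Γ := fun c => {a ∈ F | R a c}
  set H : Γ × Γ → ℝ := fun x => ‖f x.1‖ ^ 2 * ‖g x.2‖ ^ 2
  set e : (Σ _ : Γ, Γ × Γ) → Γ × Γ := fun x => (x.2.1, x.2.2⁻¹ * x.1)
  set D := C.sigma fun c => A c ×ˢ A c
  have he : Set.InjOn e D := by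
    rintro ⟨c, a, a₁⟩ hx ⟨d, a', a₂⟩ hx' hxx'
    simp only [D, A, mem_coe, mem_sigma, mem_product, mem_filter] at hx hx'
    simp only [e, Prod.mk.injEq] at hxx'
    obtain ⟨rfl, hb⟩ := hxx'
    obtain rfl := hR hx.2.1.2 hx'.2.1.2 hx.2.2.2 hx'.2.2.2 hb
    obtain rfl := mul_left_cancel hb
    rfl
  have heD : D.image e ⊆ F ×ˢ G := by
    simp only [subset_iff, mem_image, mem_product]
    rintro _ ⟨⟨c, a, a₁⟩, hx, rfl⟩
    simp only [D, A, mem_sigma, mem_product, mem_filter] at hx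
    exact ⟨hx.2.1.1, hRG hx.2.2.2⟩
  calc ∑ c ∈ C, ‖∑ a ∈ A c, f a * g (a⁻¹ * c)‖ ^ 2
      ≤ ∑ c ∈ C, ∑ x ∈ A c ×ˢ A c, H (x.1, x.2⁻¹ * c) := by
        gcongr with c
        calc ‖∑ a ∈ A c, f a * g (a⁻¹ * c)‖ ^ 2
            ≤ (∑ a ∈ A c, ‖f a‖ * ‖g (a⁻¹ * c)‖) ^ 2 := by
              gcongr
              exact (norm_sum_le _ _).trans (sum_le_sum fun a _ => norm_mul_le _ _)
          _ ≤ (∑ a ∈ A c, ‖f a‖ ^ 2) * ∑ a ∈ A c, ‖g (a⁻¹ * c)‖ ^ 2 :=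
              sum_mul_sq_le_sq_mul_sq ..
          _ = _ := by rw [sum_mul_sum, sum_product]
    _ = ∑ y ∈ D.image e, H y := by rw [sum_image he, sum_sigma]
    _ ≤ ∑ y ∈ F ×ˢ G, H y := sum_le_sum_of_subset_of_nonneg heD fun _ _ _ => by positivity
    _ = (∑ a ∈ F, ‖f a‖ ^ 2) * ∑ b ∈ G, ‖g b‖ ^ 2 := by rw [sum_mul_sum, sum_product]

end Convolution

section Action

variable {V₁ V₂ : Type*} {T₁ : SimpleGraph V₁} {T₂ : SimpleGraph V₂}
  {Γ : Type*} [Group Γ] [MulAction Γ (V₁ × V₂)]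

/-- The analogue of a product `c = a * b` with `b = a⁻¹ * c` of shape `mn` in which a subword
of length `k` cancels, as in the free group. -/
def HasCancellation (T₁ : SimpleGraph V₁) (T₂ : SimpleGraph V₂) (o : V₁ × V₂) (mn k : ℕ × ℕ)
    (a c : Γ) : Prop :=
  shape T₁ T₂ o ((a⁻¹ * c) • o) = mn ∧
    shape T₁ T₂ o (a • o) + mn = shape T₁ T₂ o (c • o) + 2 • k

theorem shape_smul_smul
    (hsh : ∀ (c : Γ) (u v : V₁ × V₂), shape T₁ T₂ (c • u) (c • v) = shape T₁ T₂ u v)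
    (o : V₁ × V₂) (a c : Γ) : shape T₁ T₂ (a • o) (c • o) = shape T₁ T₂ o ((a⁻¹ * c) • o) := by
  rw [← hsh a⁻¹, inv_smul_smul, smul_smul]

theorem exists_hasCancellation (hT₁ : T₁.IsTree) (hT₂ : T₂.IsTree)
    (hsh : ∀ (c : Γ) (u v : V₁ × V₂), shape T₁ T₂ (c • u) (c • v) = shape T₁ T₂ u v)
    (o : V₁ × V₂) (a c : Γ) :
    ∃ k ≤ shape T₁ T₂ o ((a⁻¹ * c) • o),
      HasCancellation T₁ T₂ o (shape T₁ T₂ o ((a⁻¹ * c) • o)) k a c := by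
  obtain ⟨k, hk, h⟩ := exists_shape_add_shape_eq hT₁ hT₂ o (a • o) (c • o)
  rw [shape_smul_smul hsh] at hk h
  exact ⟨k, hk, rfl, h⟩

theorem HasCancellation.unique {o : V₁ × V₂} {mn k k' : ℕ × ℕ} {a c : Γ}
    (h : HasCancellation T₁ T₂ o mn k a c) (h' : HasCancellation T₁ T₂ o mn k' a c) : k = k' := by
  have := h.2.symm.trans h'.2
  simp only [Prod.ext_iff, Prod.fst_add, Prod.snd_add, Prod.smul_fst, Prod.smul_snd,
    smul_eq_mul] at this ⊢
  omega

theorem HasCancellation.exists_median (hT₁ : T₁.IsTree) (hT₂ : T₂.IsTree)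
    (hsh : ∀ (c : Γ) (u v : V₁ × V₂), shape T₁ T₂ (c • u) (c • v) = shape T₁ T₂ u v)
    {o : V₁ × V₂} {mn k : ℕ × ℕ} {a c : Γ} (h : HasCancellation T₁ T₂ o mn k a c) :
    ∃ p, shape T₁ T₂ o p + shape T₁ T₂ p (a • o) = shape T₁ T₂ o (a • o) ∧
      shape T₁ T₂ o p + shape T₁ T₂ p (c • o) = shape T₁ T₂ o (c • o) ∧
      shape T₁ T₂ p (a • o) = k ∧ shape T₁ T₂ p (c • o) + k = mn := by
  have hac : shape T₁ T₂ (a • o) (c • o) = mn := (shape_smul_smul hsh o a c).trans h.1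
  rw [← hac]
  exact exists_median_of_shape_add_shape_eq hT₁ hT₂ (hac ▸ h.2)

theorem HasCancellation.inv_smul_median
    (hsh : ∀ (c : Γ) (u v : V₁ × V₂), shape T₁ T₂ (c • u) (c • v) = shape T₁ T₂ u v)
    {o p : V₁ × V₂} {mn k : ℕ × ℕ} {a c : Γ} (h : HasCancellation T₁ T₂ o mn k a c)
    (hpa : shape T₁ T₂ p (a • o) = k) (hpc : shape T₁ T₂ p (c • o) + k = mn) :
    shape T₁ T₂ o (a⁻¹ • p) + shape T₁ T₂ (a⁻¹ • p) ((a⁻¹ * c) • o) =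
      shape T₁ T₂ o ((a⁻¹ * c) • o) ∧
    shape T₁ T₂ (a⁻¹ • p) ((a⁻¹ * c) • o) + k = mn := by
  have hpc' : shape T₁ T₂ (a⁻¹ • p) ((a⁻¹ * c) • o) = shape T₁ T₂ p (c • o) := by
    rw [mul_smul, hsh]
  have ho : shape T₁ T₂ o (a⁻¹ • p) = k := by
    rw [shape_comm, ← hsh a, smul_inv_smul, hpa]
  rw [ho, h.1, hpc', ← hpc, add_comm]
  exact ⟨rfl, rfl⟩

theorem HasCancellation.eq_of_inv_mul_eq (hT₁ : T₁.IsTree) (hT₂ : T₂.IsTree)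
    (hsh : ∀ (c : Γ) (u v : V₁ × V₂), shape T₁ T₂ (c • u) (c • v) = shape T₁ T₂ u v)
    (hst : ∀ x y : V₁ × V₂, ∃! c : Γ, c • x = y)
    {o : V₁ × V₂} {mn k : ℕ × ℕ} {a a₁ a₂ c d : Γ}
    (hac : HasCancellation T₁ T₂ o mn k a c) (had : HasCancellation T₁ T₂ o mn k a d)
    (ha₁c : HasCancellation T₁ T₂ o mn k a₁ c) (ha₂d : HasCancellation T₁ T₂ o mn k a₂ d)
    (h : a₁⁻¹ * c = a₂⁻¹ * d) : a₁ = a₂ := by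
  obtain ⟨p, hpa, hpc, hpak, hpck⟩ := hac.exists_median hT₁ hT₂ hsh
  obtain ⟨p', hp'a, hp'd, hp'ak, hp'dk⟩ := had.exists_median hT₁ hT₂ hsh
  obtain ⟨p₁, -, hp₁c, hp₁ak, hp₁ck⟩ := ha₁c.exists_median hT₁ hT₂ hsh
  obtain ⟨p₂, -, hp₂d, hp₂ak, hp₂dk⟩ := ha₂d.exists_median hT₁ hT₂ hsh
  obtain rfl : p = p' := eq_of_shape_add_shape_eq hT₁ hT₂ hpa hp'a (hpak.trans hp'ak.symm)
  obtain rfl : p = p₁ := eq_of_shape_add_shape_eq hT₁ hT₂ hpc hp₁c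
    (add_right_cancel (hpck.trans hp₁ck.symm))
  obtain rfl : p = p₂ := eq_of_shape_add_shape_eq hT₁ hT₂ hp'd hp₂d
    (add_right_cancel (hp'dk.trans hp₂dk.symm))
  obtain ⟨hq₁, hq₁k⟩ := ha₁c.inv_smul_median hsh hp₁ak hp₁ck
  obtain ⟨hq₂, hq₂k⟩ := ha₂d.inv_smul_median hsh hp₂ak hp₂dk
  rw [h] at hq₁ hq₁k
  have hq : a₁⁻¹ • p = a₂⁻¹ • p :=
    eq_of_shape_add_shape_eq hT₁ hT₂ hq₁ hq₂ (add_right_cancel (hq₁k.trans hq₂k.symm))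
  exact (hst (a₁⁻¹ • p) p).unique (smul_inv_smul a₁ p) (by rw [hq, smul_inv_smul])

theorem coeff_mul_eq_sum_sum_hasCancellation (hT₁ : T₁.IsTree) (hT₂ : T₂.IsTree)
    (hsh : ∀ (c : Γ) (u v : V₁ × V₂), shape T₁ T₂ (c • u) (c • v) = shape T₁ T₂ u v)
    (v₀ : V₁ × V₂) (m n : ℕ) (f g : MonoidAlgebra ℂ Γ)
    (hg : ∀ c ∈ g.coeff.support, shape T₁ T₂ v₀ (c • v₀) = (m, n)) (c : Γ)
    [∀ k a, Decidable (a⁻¹ * c ∈ g.coeff.support ∧ HasCancellation T₁ T₂ v₀ (m, n) k a c)] :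
    (f * g).coeff c = ∑ k ∈ range (m + 1) ×ˢ range (n + 1),
      ∑ a ∈ f.coeff.support with a⁻¹ * c ∈ g.coeff.support ∧ HasCancellation T₁ T₂ v₀ (m, n) k a c,
        f.coeff a * g.coeff (a⁻¹ * c) := by
  rw [MonoidAlgebra.coeff_mul_apply_left, Finsupp.sum]
  refine sum_eq_sum_sum_filter_of_existsUnique _ _ _ _ fun a _ hfg => ?_
  have hb : a⁻¹ * c ∈ g.coeff.support := Finsupp.mem_support_iff.mpr (right_ne_zero_of_mul hfg)
  obtain ⟨k, hk, hck⟩ := exists_hasCancellation hT₁ hT₂ hsh v₀ a c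
  rw [hg _ hb] at hk hck
  refine ⟨k, ⟨?_, hb, hck⟩, fun k' hk' => (hck.unique hk'.2.2).symm⟩
  simpa [Nat.lt_succ_iff, Prod.le_def] using hk

end Action

/-- Haagerup's inequality for an `Ã₁×Ã₁` group, i.e. a group of shape-preserving
bijections acting simply transitively on the vertices of a product of two trees:
if `g` is supported on elements of shape `(m,n)`, then
`‖f * g‖₂ ≤ (m+1)(n+1) ‖f‖₂ ‖g‖₂`. -/
theorem haagerup_inequality_A1xA1_group {V₁ V₂ : Type*}
    (T₁ : SimpleGraph V₁) (T₂ : SimpleGraph V₂)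
    (hT₁ : T₁.IsTree) (hT₂ : T₂.IsTree)
    {Γ : Type*} [Group Γ] [MulAction Γ (V₁ × V₂)]
    (hsh : ∀ (c : Γ) (u v : V₁ × V₂), shape T₁ T₂ (c • u) (c • v) = shape T₁ T₂ u v)
    (hst : ∀ x y : V₁ × V₂, ∃! c : Γ, c • x = y)
    (v₀ : V₁ × V₂) (m n : ℕ)
    (g : MonoidAlgebra ℂ Γ)
    (hg : ∀ c ∈ g.coeff.support, shape T₁ T₂ v₀ (c • v₀) = (m, n))
    (f : MonoidAlgebra ℂ Γ) :
    l2norm (f * g) ≤ (m + 1 : ℝ) * (n + 1 : ℝ) * l2norm f * l2norm g := by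
  classical
  have hsq := sum_norm_sum_sq_le (f * g).coeff.support (range (m + 1) ×ˢ range (n + 1)) _
    fun k _ => sum_norm_sum_filter_mul_sq_le f.coeff g.coeff f.coeff.support g.coeff.support _
      (fun a c => a⁻¹ * c ∈ g.coeff.support ∧ HasCancellation T₁ T₂ v₀ (m, n) k a c)
      (fun _ _ h => h.1) fun _ _ _ _ _ hac had ha₁c ha₂d =>
        hac.2.eq_of_inv_mul_eq hT₁ hT₂ hsh hst had.2 ha₁c.2 ha₂d.2
  simp_rw [← coeff_mul_eq_sum_sum_hasCancellation hT₁ hT₂ hsh v₀ m n f g hg] at hsq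
  rw [card_product, card_range, card_range] at hsq
  push_cast at hsq
  calc l2norm (f * g)
      ≤ √(((m + 1) * (n + 1)) ^ 2 *
          ((∑ a ∈ f.coeff.support, ‖f.coeff a‖ ^ 2) * ∑ b ∈ g.coeff.support, ‖g.coeff b‖ ^ 2)) :=
        Real.sqrt_le_sqrt hsq
    _ = (m + 1 : ℝ) * (n + 1 : ℝ) * l2norm f * l2norm g := by
        rw [Real.sqrt_mul (by positivity), Real.sqrt_sq (by positivity),
          Real.sqrt_mul (by positivity), l2norm, l2norm]
        ring
end

section
/- Let Γ be the free group on a set S and for c ∈ Γ let L(c) denote the reduced word length of c. Then Γ satisfies the rapid decay estimate with respect to L: there exist constants C > 0 and s ≥ 0 such that for all finitely supported f, g : Γ → ℂ, ‖f*g‖₂ ≤ C·‖f‖₂·(Σ_{c∈Γ} |g(c)|²·(1+L(c))^{2s})^{1/2}. -/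
open Finset MonoidAlgebra Real

section L2

variable {G : Type*}

theorem l2norm_nonneg (x : MonoidAlgebra ℂ G) : 0 ≤ l2norm x := Real.sqrt_nonneg _

theorem l2norm_sq (x : MonoidAlgebra ℂ G) : l2norm x ^ 2 = ∑ c ∈ x.coeff.support, ‖x.coeff c‖ ^ 2 :=
  Real.sq_sqrt (sum_nonneg fun _ _ => by positivity)

theorem l2norm_eq_norm_toLp {x : MonoidAlgebra ℂ G} {T : Finset G} (hT : x.coeff.support ⊆ T) :
    l2norm x = ‖WithLp.toLp 2 fun c : T => x.coeff c‖ := by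
  rw [l2norm, EuclideanSpace.norm_eq, sum_subset hT fun c _ hc => by simp_all]
  exact congrArg Real.sqrt (sum_coe_sort T fun c => ‖x.coeff c‖ ^ 2).symm

theorem l2norm_add_le (x y : MonoidAlgebra ℂ G) : l2norm (x + y) ≤ l2norm x + l2norm y := by
  classical
  set T := x.coeff.support ∪ y.coeff.support
  rw [l2norm_eq_norm_toLp (x := x + y) (T := T) Finsupp.support_add,
    l2norm_eq_norm_toLp subset_union_left, l2norm_eq_norm_toLp subset_union_right]
  exact norm_add_le (WithLp.toLp 2 fun c : T => x.coeff c) (WithLp.toLp 2 fun c : T => y.coeff c)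

theorem l2norm_sum_le {ι : Type*} (s : Finset ι) (x : ι → MonoidAlgebra ℂ G) :
    l2norm (∑ i ∈ s, x i) ≤ ∑ i ∈ s, l2norm (x i) :=
  le_sum_of_subadditive l2norm (by simp [l2norm]) l2norm_add_le s x

end L2

section RestrictedMul

variable {G : Type*}

noncomputable def restrictedMul [Mul G] (P : G → G → Prop) [DecidableRel P]
    (x y : MonoidAlgebra ℂ G) : MonoidAlgebra ℂ G :=
  ∑ a ∈ x.coeff.support, ∑ b ∈ y.coeff.support,
    if P a b then single (a * b) (x.coeff a * y.coeff b) else 0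

theorem sum_restrictedMul_eq_mul [Mul G] (x y : MonoidAlgebra ℂ G) {ι : Type*} (s : Finset ι)
    (Q : ι → G → G → Prop) [∀ i, DecidableRel (Q i)]
    (hQ : ∀ a ∈ x.coeff.support, ∀ b ∈ y.coeff.support, ∃! i, i ∈ s ∧ Q i a b) :
    ∑ i ∈ s, restrictedMul (Q i) x y = x * y := by
  rw [MonoidAlgebra.mul_def, Finsupp.sum]
  simp only [restrictedMul]
  rw [sum_comm]
  refine sum_congr rfl fun a ha => ?_
  rw [sum_comm, Finsupp.sum]
  refine sum_congr rfl fun b hb => ?_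
  obtain ⟨i, ⟨hi, hQi⟩, huniq⟩ := hQ a ha b hb
  rw [sum_eq_single_of_mem i hi fun k hk hki => if_neg fun hQk => hki (huniq k ⟨hk, hQk⟩),
    if_pos hQi]

variable [Group G] (P : G → G → Prop) [DecidableRel P] (x y : MonoidAlgebra ℂ G)

theorem coeff_restrictedMul [DecidableEq G] (c : G) :
    (restrictedMul P x y).coeff c =
      ∑ a ∈ x.coeff.support with a⁻¹ * c ∈ y.coeff.support ∧ P a (a⁻¹ * c),
        x.coeff a * y.coeff (a⁻¹ * c) := by
  simp only [restrictedMul, coeff_sum, Finsupp.coe_finsetSum, Finset.sum_apply, sum_filter]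
  refine sum_congr rfl fun a _ => ?_
  have hsingle : ∀ b, (if P a b then single (a * b) (x.coeff a * y.coeff b) else 0).coeff c =
      if a⁻¹ * c = b then (if P a b then x.coeff a * y.coeff b else 0) else 0 := fun b => by
    by_cases hb : a⁻¹ * c = b
    · subst hb
      by_cases hP : P a (a⁻¹ * c) <;> simp [hP]
    · have hc : a * b ≠ c := fun h => hb (by rw [← h, inv_mul_cancel_left])
      split_ifs <;> simp [hc]
  rw [sum_congr rfl fun b _ => hsingle b, sum_ite_eq, ite_and]

theorem l2norm_restrictedMul_le (hP : ∀ a b, {c | P a (a⁻¹ * c) ∧ P (c * b⁻¹) b}.Subsingleton) :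
    l2norm (restrictedMul P x y) ≤ l2norm x * l2norm y := by
  classical
  set H := restrictedMul P x y
  set A := fun c => x.coeff.support.filter fun a => a⁻¹ * c ∈ y.coeff.support ∧ P a (a⁻¹ * c)
  set B := fun c => y.coeff.support.filter fun b => P (c * b⁻¹) b
  have pointwise (c : G) : ‖H.coeff c‖ ^ 2 ≤
      (∑ a ∈ A c, ‖x.coeff a‖ ^ 2) * ∑ b ∈ B c, ‖y.coeff b‖ ^ 2 := by
    calc ‖H.coeff c‖ ^ 2 ≤ (∑ a ∈ A c, ‖x.coeff a‖ * ‖y.coeff (a⁻¹ * c)‖) ^ 2 := by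
          rw [coeff_restrictedMul]
          gcongr
          exact (norm_sum_le _ _).trans_eq (by simp_rw [norm_mul]; rfl)
      _ ≤ (∑ a ∈ A c, ‖x.coeff a‖ ^ 2) * ∑ a ∈ A c, ‖y.coeff (a⁻¹ * c)‖ ^ 2 :=
          sum_mul_sq_le_sq_mul_sq _ _ _
      _ ≤ _ := by
          gcongr
          rw [← sum_image (f := fun b => ‖y.coeff b‖ ^ 2)
            fun a _ a' _ h => inv_injective (mul_right_cancel h)]
          refine sum_le_sum_of_subset_of_nonneg (fun b hb => ?_) fun _ _ _ => by positivity
          obtain ⟨a, ha, rfl⟩ := mem_image.1 hb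
          simp_all [A, B]
  have counting :
      ∑ c ∈ H.coeff.support, (∑ a ∈ A c, ‖x.coeff a‖ ^ 2) * ∑ b ∈ B c, ‖y.coeff b‖ ^ 2 ≤
        (∑ a ∈ x.coeff.support, ‖x.coeff a‖ ^ 2) * ∑ b ∈ y.coeff.support, ‖y.coeff b‖ ^ 2 := by
    simp only [A, B, sum_filter, sum_mul_sum, ite_zero_mul_ite_zero]
    rw [sum_comm]
    refine sum_le_sum fun a _ => ?_
    rw [sum_comm]
    refine sum_le_sum fun b _ => ?_
    rw [← sum_filter, sum_const, nsmul_eq_mul]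
    refine mul_le_of_le_one_left (by positivity) (Nat.cast_le_one.2 (card_le_one.2 ?_))
    intro c₁ h₁ c₂ h₂
    simp only [mem_filter] at h₁ h₂
    exact hP a b ⟨h₁.2.1.2, h₁.2.2⟩ ⟨h₂.2.1.2, h₂.2.2⟩
  rw [l2norm, l2norm, l2norm, ← Real.sqrt_mul (sum_nonneg fun _ _ => by positivity)]
  exact Real.sqrt_le_sqrt ((sum_le_sum fun c _ => pointwise c).trans counting)

end RestrictedMul

section LevelSets

variable {G ι : Type*} [DecidableEq ι]

noncomputable def restrictLevel (ℓ : G → ι) (i : ι) (x : MonoidAlgebra ℂ G) : MonoidAlgebra ℂ G :=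
  ofCoeff (x.coeff.filter fun c => ℓ c = i)

variable (ℓ : G → ι) (x : MonoidAlgebra ℂ G)

theorem mem_support_restrictLevel {i : ι} {c : G}
    (hc : c ∈ (restrictLevel ℓ i x).coeff.support) : ℓ c = i := by
  simp only [restrictLevel, coeff_ofCoeff, Finsupp.support_filter, mem_filter] at hc
  exact hc.2

theorem sum_restrictLevel :
    ∑ i ∈ x.coeff.support.image ℓ, restrictLevel ℓ i x = x := by
  ext c
  simp only [restrictLevel, coeff_sum, Finsupp.coe_finsetSum, Finset.sum_apply,
    Finsupp.filter_apply, sum_ite_eq]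
  by_cases hc : c ∈ x.coeff.support
  · rw [if_pos (mem_image_of_mem ℓ hc)]
  · simp_all

theorem sum_sq_mul_eq_sum_l2norm_restrictLevel_sq (w : ι → ℝ) :
    ∑ c ∈ x.coeff.support, ‖x.coeff c‖ ^ 2 * w (ℓ c) =
      ∑ i ∈ x.coeff.support.image ℓ, w i * l2norm (restrictLevel ℓ i x) ^ 2 := by
  rw [← sum_fiberwise_of_maps_to fun c hc => mem_image_of_mem ℓ hc]
  refine sum_congr rfl fun i _ => ?_
  simp only [l2norm_sq, restrictLevel, Finsupp.support_filter, mul_sum]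
  refine sum_congr rfl fun c hc => ?_
  rw [Finsupp.filter_apply_pos (fun c => ℓ c = i) _ (mem_filter.1 hc).2, (mem_filter.1 hc).2,
    mul_comm]

end LevelSets

theorem sum_succ_mul_le_sqrt_zeta_two_mul_sqrt (s : Finset ℕ) (w : ℕ → ℝ) :
    ∑ m ∈ s, ((m : ℝ) + 1) * w m ≤ √(π ^ 2 / 6) * √(∑ m ∈ s, ((m : ℝ) + 1) ^ 4 * w m ^ 2) := by
  have basel : ∑ m ∈ s, ((m : ℝ) + 1)⁻¹ ^ 2 ≤ π ^ 2 / 6 := by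
    have h : HasSum (fun m : ℕ => ((m : ℝ) + 1)⁻¹ ^ 2) (π ^ 2 / 6) := by
      simpa using (hasSum_nat_add_iff' 1).2 hasSum_zeta_two
    exact sum_le_hasSum s (fun _ _ => by positivity) h
  calc ∑ m ∈ s, ((m : ℝ) + 1) * w m = ∑ m ∈ s, ((m : ℝ) + 1)⁻¹ * (((m : ℝ) + 1) ^ 2 * w m) :=
        sum_congr rfl fun m _ => by field_simp
    _ ≤ √(∑ m ∈ s, ((m : ℝ) + 1)⁻¹ ^ 2) * √(∑ m ∈ s, (((m : ℝ) + 1) ^ 2 * w m) ^ 2) :=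
        sum_mul_le_sqrt_mul_sqrt _ _ _
    _ ≤ √(π ^ 2 / 6) * √(∑ m ∈ s, ((m : ℝ) + 1) ^ 4 * w m ^ 2) := by
        gcongr with m
        exact le_of_eq (by ring)

namespace FreeGroup

variable {α : Type*} [DecidableEq α]

theorem exists_reduce_append_eq {u v : List (α × Bool)} (hu : IsReduced u) (hv : IsReduced v) :
    ∃ p q r, u = p ++ q ∧ v = invRev q ++ r ∧ reduce (u ++ v) = p ++ r := by
  induction v generalizing u with
  | nil => exact ⟨u, [], [], by simp, by simp [invRev], by simpa using hu.reduce_eq⟩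
  | cons y v ih =>
    rcases List.eq_nil_or_concat' u with rfl | ⟨u, x, rfl⟩
    · exact ⟨[], [], y :: v, rfl, by simp [invRev], hv.reduce_eq⟩
    by_cases hxy : y = (x.1, !x.2)
    · obtain ⟨p, q, r, rfl, rfl, hred⟩ := ih (hu.infix ⟨[], [x], rfl⟩) (hv.infix ⟨[y], [], by simp⟩)
      refine ⟨p, q ++ [x], r, by simp, by simp [hxy, invRev], ?_⟩
      rw [← hred, hxy]
      exact reduce.Step.eq (by simpa using Red.Step.not (L₁ := p ++ q) (x := x.1) (b := x.2))
    · refine ⟨u ++ [x], [], y :: v, by simp, by simp [invRev], IsReduced.reduce_eq ?_⟩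
      refine List.IsChain.append hu hv ?_
      simp only [List.getLast?_concat, Option.mem_def, Option.some.injEq, List.head?_cons,
        forall_eq']
      intro h
      cases x; cases y
      simp_all

theorem exists_toWord_mul (x y : FreeGroup α) :
    ∃ p q r, x.toWord = p ++ q ∧ y.toWord = invRev q ++ r ∧ (x * y).toWord = p ++ r := by
  simpa only [toWord_mul] using exists_reduce_append_eq (isReduced_toWord (x := x)) isReduced_toWord

/-- The number of letters cancelled on each side when `x.toWord ++ y.toWord` is reduced. -/
def cancelLength (x y : FreeGroup α) : ℕ := (x.norm + y.norm - (x * y).norm) / 2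

theorem cancelLength_le_norm_right (x y : FreeGroup α) : cancelLength x y ≤ y.norm := by
  obtain ⟨p, q, r, hx, hy, hxy⟩ := exists_toWord_mul x y
  simp only [cancelLength, norm, hx, hy, hxy, List.length_append, invRev_length]
  omega

theorem toWord_mul_eq_take_append_drop (x y : FreeGroup α) :
    (x * y).toWord =
      x.toWord.take (x.norm - cancelLength x y) ++ y.toWord.drop (cancelLength x y) := by
  obtain ⟨p, q, r, hx, hy, hxy⟩ := exists_toWord_mul x y
  have hq : cancelLength x y = q.length := by
    simp only [cancelLength, norm, hx, hy, hxy, List.length_append, invRev_length]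
    omega
  rw [hxy, hq, norm, hx, hy, List.take_left' (by simp), List.drop_left' invRev_length]

theorem toWord_eq_take_append_drop {a b c : FreeGroup α} {j : ℕ}
    (hnorm : (a⁻¹ * c).norm = b.norm) (ha : cancelLength a (a⁻¹ * c) = j)
    (hb : cancelLength (c * b⁻¹) b = j) :
    c.toWord = a.toWord.take (a.norm - j) ++ b.toWord.drop j := by
  have h₁ := toWord_mul_eq_take_append_drop a (a⁻¹ * c)
  have h₂ := toWord_mul_eq_take_append_drop (c * b⁻¹) b
  rw [mul_inv_cancel_left, ha] at h₁
  rw [inv_mul_cancel_right, hb] at h₂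
  have hlen : ((a⁻¹ * c).toWord.drop j).length = (b.toWord.drop j).length := by
    simpa [norm] using congrArg (· - j) hnorm
  rwa [(List.append_inj' (h₁.symm.trans h₂) hlen).2] at h₁

theorem l2norm_mul_le_of_norm_eq (f g : MonoidAlgebra ℂ (FreeGroup α)) {m : ℕ}
    (hg : ∀ b ∈ g.coeff.support, b.norm = m) :
    l2norm (f * g) ≤ (m + 1) * (l2norm f * l2norm g) := by
  let P (j : ℕ) (a b : FreeGroup α) : Prop := b.norm = m ∧ cancelLength a b = j
  have hdecomp : ∑ j ∈ range (m + 1), restrictedMul (P j) f g = f * g := by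
    refine sum_restrictedMul_eq_mul f g _ P fun a _ b hb => ⟨cancelLength a b, ⟨?_, hg b hb, rfl⟩,
      fun j ⟨_, _, hj⟩ => hj.symm⟩
    exact mem_range.2 (Nat.lt_succ_of_le (hg b hb ▸ cancelLength_le_norm_right a b))
  have hpiece (j : ℕ) : l2norm (restrictedMul (P j) f g) ≤ l2norm f * l2norm g := by
    refine l2norm_restrictedMul_le _ f g fun a b c₁ ⟨h₁, h₁'⟩ c₂ ⟨h₂, h₂'⟩ => toWord_injective ?_
    rw [toWord_eq_take_append_drop (h₁.1.trans h₁'.1.symm) h₁.2 h₁'.2,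
      toWord_eq_take_append_drop (h₂.1.trans h₂'.1.symm) h₂.2 h₂'.2]
  calc l2norm (f * g) ≤ ∑ j ∈ range (m + 1), l2norm (restrictedMul (P j) f g) :=
        hdecomp ▸ l2norm_sum_le _ _
    _ ≤ ∑ j ∈ range (m + 1), l2norm f * l2norm g := sum_le_sum fun j _ => hpiece j
    _ = (m + 1) * (l2norm f * l2norm g) := by simp

end FreeGroup

/-- Property (RD) for the free group on a set `S`, with respect to the reduced
word length function. -/
theorem property_RD_free_group {S : Type*} [DecidableEq S] :
    ∃ C : ℝ, 0 < C ∧ ∃ s : ℝ, 0 ≤ s ∧ ∀ f g : MonoidAlgebra ℂ (FreeGroup S),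
      l2norm (f * g) ≤ C * l2norm f *
        Real.sqrt (∑ c ∈ g.coeff.support, ‖g.coeff c‖ ^ 2 *
          (1 + ((FreeGroup.toWord c).length : ℝ)) ^ (2 * s)) := by
  refine ⟨√(π ^ 2 / 6), by positivity, 2, zero_le_two, fun f g => ?_⟩
  set s := g.coeff.support.image FreeGroup.norm
  set gₘ := fun m => restrictLevel FreeGroup.norm m g
  have hweight : ∑ c ∈ g.coeff.support, ‖g.coeff c‖ ^ 2 *
      (1 + ((FreeGroup.toWord c).length : ℝ)) ^ (2 * (2 : ℝ)) =
      ∑ m ∈ s, ((m : ℝ) + 1) ^ 4 * l2norm (gₘ m) ^ 2 := by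
    rw [← sum_sq_mul_eq_sum_l2norm_restrictLevel_sq]
    refine sum_congr rfl fun c _ => ?_
    norm_num [FreeGroup.norm, add_comm]
  calc l2norm (f * g) = l2norm (∑ m ∈ s, f * gₘ m) := by rw [← mul_sum, sum_restrictLevel]
    _ ≤ ∑ m ∈ s, l2norm (f * gₘ m) := l2norm_sum_le _ _
    _ ≤ ∑ m ∈ s, ((m : ℝ) + 1) * (l2norm f * l2norm (gₘ m)) :=
        sum_le_sum fun m _ => FreeGroup.l2norm_mul_le_of_norm_eq f (gₘ m)
          fun b hb => mem_support_restrictLevel _ _ hb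
    _ = l2norm f * ∑ m ∈ s, ((m : ℝ) + 1) * l2norm (gₘ m) := by
        rw [mul_sum]
        exact sum_congr rfl fun m _ => by ring
    _ ≤ l2norm f * (√(π ^ 2 / 6) * √(∑ m ∈ s, ((m : ℝ) + 1) ^ 4 * l2norm (gₘ m) ^ 2)) := by
        gcongr
        · exact l2norm_nonneg f
        · exact sum_succ_mul_le_sqrt_zeta_two_mul_sqrt _ _
    _ = _ := by rw [hweight]; ring
end
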